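/- Under the stated setting, for each k ∈ [s+1, r] one has the ideal identity J_{K_m,G̃} = (J_{K_m,G̃} ∩ A_s ∩ ⋯ ∩ A_{k−1}) + (J_{K_m,G̃} ∩ A_k), where G̃ = K_n is the complete graph on [n]. -/

import Mathlib

/-!
A generating minor of `J` on columns `a < b` lies in `A_t` as soon as column `a` lies outside
`V_t`. So it lies in `A_k` if `a ∉ V_k`, and otherwise, the parts being disjoint, in every `A_t`
with `t ≠ k`. An ideal spanned by elements each lying in `I₁` or in `I₂` is the sum
of its intersections with `I₁` and `I₂`.
-/

open MvPolynomial

/-- The first vertex (as a natural number) of the `k`-th part, i.e. `Σ_{i<k} ν i`. -/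
def partStart {r : ℕ} (ν : Fin r → ℕ) (k : Fin r) : ℕ := ∑ i ∈ Finset.Iio k, ν i

/-- The natural number `j` is a vertex lying in the `k`-th part `V_k`. -/
def inPart {r : ℕ} (ν : Fin r → ℕ) (k : Fin r) (j : ℕ) : Prop :=
  partStart ν k ≤ j ∧ j < partStart ν k + ν k

/-- The generalized binomial edge ideal `J_{K_m,G̃}` of the complete graph `G̃ = K_n`,
i.e. the ideal of all `2 × 2` minors of the generic `m × n` matrix `(x_{ij})`. -/
noncomputable def Jcomplete (K : Type) [Field K] (m n : ℕ) : Ideal (MvPolynomial (Fin m × Fin n) K) :=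
  Ideal.span {p | ∃ (i j : Fin m) (k l : Fin n), i < j ∧ k < l ∧
    p = X (i, k) * X (j, l) - X (i, l) * X (j, k)}

/-- The prime ideal `A_k = (x_{uj} : u ∈ [m], j ∈ T_k)`, `T_k = ⋃_{i ≠ k} V_i`. -/
noncomputable def Aideal (K : Type) [Field K] (m r n : ℕ) (ν : Fin r → ℕ) (k : Fin r) :
    Ideal (MvPolynomial (Fin m × Fin n) K) :=
  Ideal.span {p | ∃ (u : Fin m) (j : Fin n), ¬ inPart ν k (j : ℕ) ∧ p = X (u, j)}

theorem Ideal.span_eq_inf_sup_inf_of_forall_mem_or {R : Type*} [Semiring R] {S : Set R}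
    {I₁ I₂ : Ideal R} (h : ∀ p ∈ S, p ∈ I₁ ∨ p ∈ I₂) :
    Ideal.span S = (Ideal.span S ⊓ I₁) ⊔ (Ideal.span S ⊓ I₂) := by
  refine le_antisymm ?_ (sup_le inf_le_left inf_le_left)
  rw [Ideal.span_le]
  intro p hp
  rcases h p hp with h₁ | h₂
  · exact Ideal.mem_sup_left ⟨Ideal.subset_span hp, h₁⟩
  · exact Ideal.mem_sup_right ⟨Ideal.subset_span hp, h₂⟩

lemma partStart_add_le {r : ℕ} (ν : Fin r → ℕ) {i k : Fin r} (h : i < k) :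
    partStart ν i + ν i ≤ partStart ν k := by
  rw [partStart, partStart, add_comm, ← Finset.sum_insert (s := Finset.Iio i) (by simp)]
  refine Finset.sum_le_sum_of_subset fun x hx => ?_
  simp only [Finset.mem_insert, Finset.mem_Iio] at hx ⊢
  rcases hx with rfl | hx
  · exact h
  · exact hx.trans h

lemma not_inPart_of_ne {r : ℕ} (ν : Fin r → ℕ) {i k : Fin r} (hik : i ≠ k) {j : ℕ}
    (hk : inPart ν k j) : ¬ inPart ν i j := by
  rintro ⟨hi₁, hi₂⟩
  obtain ⟨hk₁, hk₂⟩ := hk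
  rcases hik.lt_or_gt with h | h
  · have := partStart_add_le ν h
    omega
  · have := partStart_add_le ν h
    omega

section Aideal

variable (K : Type) [Field K] (m r n : ℕ) (ν : Fin r → ℕ) (k : Fin r)

lemma X_mem_Aideal {u : Fin m} {j : Fin n} (h : ¬ inPart ν k j) :
    X (u, j) ∈ Aideal K m r n ν k :=
  Ideal.subset_span ⟨u, j, h, rfl⟩

lemma minor_mem_Aideal (i j : Fin m) {a : Fin n} (b : Fin n) (h : ¬ inPart ν k a) :
    X (i, a) * X (j, b) - X (i, b) * X (j, a) ∈ Aideal K m r n ν k :=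
  sub_mem (Ideal.mul_mem_right _ _ (X_mem_Aideal K m r n ν k h))
    (Ideal.mul_mem_left _ _ (X_mem_Aideal K m r n ν k h))

end Aideal

theorem stmt5_general (K : Type) [Field K] (m r : ℕ)
    (ν : Fin r → ℕ) (s : Fin r)
    (n : ℕ) :
    ∀ k : Fin r, s < k →
      Jcomplete K m n =
        (Jcomplete K m n ⊓ ⨅ i ∈ Finset.Ico s k, Aideal K m r n ν i) ⊔
          (Jcomplete K m n ⊓ Aideal K m r n ν k) := by
  intro k _
  refine Ideal.span_eq_inf_sup_inf_of_forall_mem_or ?_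
  rintro p ⟨i, j, a, b, -, -, rfl⟩
  by_cases hk : inPart ν k a
  · left
    refine Ideal.mem_iInf.mpr fun t => Ideal.mem_iInf.mpr fun ht => ?_
    exact minor_mem_Aideal K m r n ν t i j b (not_inPart_of_ne ν (Finset.mem_Ico.mp ht).2.ne hk)
  · exact Or.inr (minor_mem_Aideal K m r n ν k i j b hk)

/-- For each `k ∈ [s+1, r]`,
`J_{K_m,G̃} = (J_{K_m,G̃} ∩ A_s ∩ ⋯ ∩ A_{k-1}) + (J_{K_m,G̃} ∩ A_k)`. -/
theorem stmt5 (K : Type) [Field K] (m r : ℕ) (hm : 2 ≤ m) (hr : 2 ≤ r)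
    (ν : Fin r → ℕ) (s : Fin r) (hmono : Monotone ν)
    (hone : ∀ i : Fin r, i < s → ν i = 1) (hs : 2 ≤ ν s)
    (n : ℕ) (hn : n = ∑ i, ν i) :
    ∀ k : Fin r, s < k →
      Jcomplete K m n =
        (Jcomplete K m n ⊓ ⨅ i ∈ Finset.Ico s k, Aideal K m r n ν i) ⊔
          (Jcomplete K m n ⊓ Aideal K m r n ν k) :=
  stmt5_general K m r ν s n
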